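/- arXiv:1901.02317 — 2 statements merged into one kernel-verified Lean document; each statement's English description precedes it below -/
import Mathlib

section
/- Let C : ℝⁿ → ℝ be a bounded measurable function. Then for every s > 0, ∫_{[−s,s]ⁿ} ∫_{[−s,s]ⁿ} C(x−y) dx dy = (2s)ⁿ ∫_{[−2s,2s]ⁿ} C(x) ∏_{i=1}^n (1 − |x_i|/(2s)) dx. -/
/-!
The shear `(x, y) ↦ (x - y, y)` preserves Lebesgue measure on `ℝⁿ × ℝⁿ`, so by Fubini the double
integral equals `∫ C(z) |Q ∩ (Q - z)| dz` with `Q = [-s,s]ⁿ`. The set `Q ∩ (Q - z)` is a box with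
sides `(2s - |zᵢ|)⁺`, so its volume is the tent `∏ᵢ (2s - |zᵢ|)⁺`, which vanishes outside
`[-2s,2s]ⁿ` and equals `(2s)ⁿ ∏ᵢ (1 - |zᵢ|/(2s))` inside.
-/

open MeasureTheory Filter Topology
open scoped BigOperators

noncomputable section

def cube (n : ℕ) (s : ℝ) : Set (Fin n → ℝ) := Set.Icc (fun _ => -s) (fun _ => s)

theorem integral_integral_sub_eq_integral_measureReal_mul {G : Type*} [AddGroup G]
    [MeasurableSpace G] [MeasurableAdd₂ G] [MeasurableNeg G] {μ : Measure G} [SFinite μ]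
    [μ.IsAddRightInvariant] {A B : Set G} (hA : MeasurableSet A) (hB : MeasurableSet B)
    (hAμ : μ A ≠ ⊤) (hBμ : μ B ≠ ⊤) {C : G → ℝ} (hC : Measurable C) {M : ℝ}
    (hM : ∀ x, |C x| ≤ M) :
    ∫ x in A, ∫ y in B, C (x - y) ∂μ ∂μ = ∫ z, μ.real (B ∩ (z + ·) ⁻¹' A) * C z ∂μ := by
  classical
  set F : G × G → ℝ := (A ×ˢ B).indicator fun p => C (p.1 - p.2) with hF_def
  set H : G × G → ℝ := ((fun p => (p.1 + p.2, p.2)) ⁻¹' (A ×ˢ B)).indicator fun p => C p.1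
    with hH_def
  have hshear : MeasurePreserving (fun p : G × G => (p.1 - p.2, p.2)) (μ.prod μ) (μ.prod μ) :=
    measurePreserving_sub_prod μ μ
  have hHF : H ∘ (fun p : G × G => (p.1 - p.2, p.2)) = F := by
    ext p
    simp only [hH_def, hF_def, Function.comp_apply, Set.indicator_apply, Set.mem_preimage,
      sub_add_cancel]
  have hHm : Measurable H :=
    (hC.comp measurable_fst).indicator
      ((hA.prod hB).preimage (measurable_add.prodMk measurable_snd))
  have hF : Integrable F (μ.prod μ) := by
    refine (integrable_indicator_iff (hA.prod hB)).2 (Measure.integrableOn_of_bounded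
      (M := M) ?_ (hC.comp measurable_sub).aestronglyMeasurable (ae_of_all _ fun p => hM _))
    rw [Measure.prod_prod]
    exact ENNReal.mul_ne_top hAμ hBμ
  have hH : Integrable H (μ.prod μ) := by
    rwa [← hshear.integrable_comp hHm.aestronglyMeasurable, hHF]
  calc ∫ x in A, ∫ y in B, C (x - y) ∂μ ∂μ = ∫ x, ∫ y, F (x, y) ∂μ ∂μ := by
        rw [← integral_indicator hA]
        congr 1 with x
        by_cases hx : x ∈ A
        · rw [Set.indicator_of_mem hx, ← integral_indicator hB]
          congr 1 with y
          simp only [hF_def, Set.indicator_apply, Set.mem_prod, hx, true_and]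
        · simp [hF_def, hx]
    _ = ∫ p, H p ∂μ.prod μ := by
        rw [← integral_prod F hF, ← hHF]
        conv_rhs => rw [← hshear.map_eq]
        exact (integral_map hshear.measurable.aemeasurable
          (by rw [hshear.map_eq]; exact hHm.aestronglyMeasurable)).symm
    _ = ∫ z, μ.real (B ∩ (z + ·) ⁻¹' A) * C z ∂μ := by
        rw [integral_prod H hH]
        congr 1 with z
        rw [← integral_indicator_one (hB.inter (hA.preimage (measurable_const_add z))),
          ← integral_mul_const]
        congr 1 with y
        simp only [hH_def, Set.indicator_apply, Set.mem_preimage, Set.mem_prod, Set.mem_inter_iff,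
          Pi.one_apply, ite_mul, one_mul, zero_mul, and_comm]

theorem measurableSet_cube (n : ℕ) (s : ℝ) : MeasurableSet (cube n s) := measurableSet_Icc

theorem volume_cube_ne_top (n : ℕ) (s : ℝ) : volume (cube n s) ≠ ⊤ :=
  isCompact_Icc.measure_lt_top.ne

theorem mem_cube_iff_abs_le {n : ℕ} {s : ℝ} {x : Fin n → ℝ} : x ∈ cube n s ↔ ∀ i, |x i| ≤ s := by
  simp only [cube, Set.mem_Icc, Pi.le_def, abs_le, forall_and]

theorem cube_inter_preimage_const_add (n : ℕ) (s : ℝ) (z : Fin n → ℝ) :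
    cube n s ∩ (z + ·) ⁻¹' cube n s =
      Set.Icc (fun i => max (-s) (-s - z i)) (fun i => min s (s - z i)) := by
  ext y
  simp only [cube, Set.mem_inter_iff, Set.mem_preimage, Set.mem_Icc, Pi.le_def, Pi.add_apply,
    max_le_iff, le_min_iff]
  constructor
  · rintro ⟨⟨hl, hu⟩, hzl, hzu⟩
    exact ⟨fun i => ⟨hl i, by linarith [hzl i]⟩, fun i => ⟨hu i, by linarith [hzu i]⟩⟩
  · rintro ⟨hl, hu⟩
    exact ⟨⟨fun i => (hl i).1, fun i => (hu i).1⟩,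
      fun i => by linarith [(hl i).2], fun i => by linarith [(hu i).2]⟩

theorem min_sub_sub_max_sub (s t : ℝ) : min s (s - t) - max (-s) (-s - t) = 2 * s - |t| := by
  rcases le_total t 0 with ht | ht
  · rw [abs_of_nonpos ht, min_eq_left (by linarith), max_eq_right (by linarith)]
    ring
  · rw [abs_of_nonneg ht, min_eq_right (by linarith), max_eq_left (by linarith)]
    ring

theorem volume_real_cube_inter_preimage_const_add (n : ℕ) (s : ℝ) (z : Fin n → ℝ) :
    volume.real (cube n s ∩ (z + ·) ⁻¹' cube n s) = ∏ i, max (2 * s - |z i|) 0 := by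
  rw [cube_inter_preimage_const_add, measureReal_def, Real.volume_Icc_pi, ENNReal.toReal_prod]
  refine Finset.prod_congr rfl fun i _ => ?_
  rw [min_sub_sub_max_sub, ENNReal.toReal_ofReal']

theorem prod_max_sub_abs_eq_indicator_cube {n : ℕ} {r : ℝ} (hr : 0 < r) (z : Fin n → ℝ) :
    ∏ i, max (r - |z i|) 0 = (cube n r).indicator (fun x => r ^ n * ∏ i, (1 - |x i| / r)) z := by
  by_cases hz : z ∈ cube n r
  · rw [Set.indicator_of_mem hz, ← Fin.prod_const, ← Finset.prod_mul_distrib]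
    refine Finset.prod_congr rfl fun i _ => ?_
    rw [max_eq_left (sub_nonneg.2 (mem_cube_iff_abs_le.1 hz i))]
    field_simp
  · rw [Set.indicator_of_notMem hz]
    obtain ⟨i, hi⟩ : ∃ i, r < |z i| := by simpa [mem_cube_iff_abs_le] using hz
    exact Finset.prod_eq_zero (Finset.mem_univ i) (max_eq_right (by linarith))

/-- identity (5.2). For bounded measurable `C : ℝⁿ → ℝ` and `s > 0`,
`∫_{[-s,s]ⁿ}∫_{[-s,s]ⁿ} C(x-y) dx dy = (2s)ⁿ ∫_{[-2s,2s]ⁿ} C(x) ∏ᵢ (1 - |xᵢ|/(2s)) dx`. -/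
theorem stmt7 {n : ℕ} (C : (Fin n → ℝ) → ℝ) (hmeas : Measurable C)
    (hbdd : ∃ M : ℝ, ∀ x, |C x| ≤ M) (s : ℝ) (hs : 0 < s) :
    ∫ x in cube n s, ∫ y in cube n s, C (x - y) =
      (2*s) ^ n * ∫ x in cube n (2*s), C x * ∏ i, (1 - |x i| / (2*s)) := by
  obtain ⟨M, hM⟩ := hbdd
  rw [integral_integral_sub_eq_integral_measureReal_mul (measurableSet_cube n s)
    (measurableSet_cube n s) (volume_cube_ne_top n s) (volume_cube_ne_top n s) hmeas hM,
    ← integral_const_mul, ← integral_indicator (measurableSet_cube n (2 * s))]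
  congr 1 with z
  rw [volume_real_cube_inter_preimage_const_add, prod_max_sub_abs_eq_indicator_cube (by positivity)]
  by_cases hz : z ∈ cube n (2 * s)
  · simp only [Set.indicator_of_mem hz]
    ring
  · simp only [Set.indicator_of_notMem hz, zero_mul]
end
end

section
/- Let C ∈ L¹(ℝⁿ) and let 0 < y₁ ≤ y₂. Setting s₁ = s·y₁^{1/n} and s₂ = s·y₂^{1/n}, one has lim_{s→∞} (2s)^{−n} ∫_{[−s₁,s₁]ⁿ} ∫_{[−s₂,s₂]ⁿ} C(x−y) dx dy = y₁ ∫_{ℝⁿ} C(u) du. -/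
open MeasureTheory Filter Topology
open scoped BigOperators

noncomputable section

/-! By Fubini and the substitution `y = x - u`, the double integral is
`∫ C(u) |[-s₁,s₁]ⁿ ∩ (u + [-s₂,s₂]ⁿ)| du`. For fixed `u` the overlap is a product of interval
overlaps, each of length `2s₁ - O(1)` because `s₁ ≤ s₂`, so after division by `(2s)ⁿ` it tends to
`(y₁^{1/n})ⁿ = y₁`; it is also bounded by `|[-s₁,s₁]ⁿ| / (2s)ⁿ = y₁`, and dominated convergence
concludes. -/

section SubConvolution

variable {G : Type*} [AddCommGroup G] [MeasurableSpace G] [MeasurableAdd₂ G] [MeasurableNeg G]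
  {μ : Measure G} {S T : Set G}

theorem measurable_measureReal_inter_preimage_sub [SFinite μ] (hS : MeasurableSet S)
    (hT : MeasurableSet T) : Measurable fun u => μ.real (S ∩ (· - u) ⁻¹' T) := by
  have hW : MeasurableSet {p : G × G | p.2 ∈ S ∧ p.2 - p.1 ∈ T} :=
    (measurable_snd hS).inter (hT.preimage (measurable_snd.sub measurable_fst))
  exact (measurable_measure_prodMk_left hW).ennreal_toReal

theorem setIntegral_setIntegral_sub [SFinite μ] [μ.IsAddLeftInvariant] [μ.IsNegInvariant]
    (hSfin : μ S ≠ ⊤) (hT : MeasurableSet T) {C : G → ℝ} (hC : Integrable C μ) :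
    ∫ x in S, ∫ y in T, C (x - y) ∂μ ∂μ = ∫ u, μ.real (S ∩ (· - u) ⁻¹' T) * C u ∂μ := by
  have : IsFiniteMeasure (μ.restrict S) := isFiniteMeasure_restrict.2 hSfin
  have hsubst : ∀ x, ∫ y in T, C (x - y) ∂μ = ∫ u, T.indicator (fun _ => C u) (x - u) ∂μ := by
    intro x
    rw [← integral_indicator hT, ← integral_sub_left_eq_self (T.indicator fun y => C (x - y)) μ x]
    simp only [Set.indicator, sub_sub_cancel]
  have hint : Integrable (Function.uncurry fun x u => T.indicator (fun _ => C u) (x - u))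
      ((μ.restrict S).prod μ) := by
    refine (hC.comp_snd (μ.restrict S)).mono ?_ (ae_of_all _ fun p => ?_)
    · exact hC.1.comp_snd.indicator (hT.preimage measurable_sub)
    · exact norm_indicator_le_norm_self (fun _ => C p.2) (p.1 - p.2)
  simp_rw [hsubst]
  rw [integral_integral_swap hint]
  congr 1 with u
  have hpre : MeasurableSet ((· - u) ⁻¹' T) := hT.preimage (measurable_sub_const u)
  rw [Set.inter_comm, ← measureReal_restrict_apply hpre, ← smul_eq_mul, ← setIntegral_const,
    ← integral_indicator hpre]
  rfl

end SubConvolution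

open Set

theorem volume_real_cube {n : ℕ} {s : ℝ} (hs : 0 ≤ s) : volume.real (cube n s) = (2 * s) ^ n := by
  rw [measureReal_def, cube, Real.volume_Icc_pi_toReal (fun _ => by linarith)]
  simp only [Finset.prod_const, Finset.card_univ, Fintype.card_fin]
  ring

theorem cube_inter_preimage_sub {n : ℕ} (a b : ℝ) (u : Fin n → ℝ) :
    cube n a ∩ (· - u) ⁻¹' cube n b = univ.pi fun i => Icc (-a) a ∩ Icc (u i - b) (u i + b) := by
  ext x
  simp only [cube, mem_inter_iff, mem_preimage, mem_Icc, Pi.le_def, Pi.sub_apply, mem_univ_pi,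
    forall_and]
  refine and_congr_right fun _ => and_congr (forall_congr' fun i => ?_) (forall_congr' fun i => ?_)
  · exact neg_le_sub_iff_le_add'.trans sub_le_iff_le_add'.symm
  · exact sub_le_iff_le_add'

theorem volume_real_cube_inter_preimage_sub {n : ℕ} (a b : ℝ) (u : Fin n → ℝ) :
    volume.real (cube n a ∩ (· - u) ⁻¹' cube n b) =
      ∏ i, volume.real (Icc (-a) a ∩ Icc (u i - b) (u i + b)) := by
  rw [cube_inter_preimage_sub, measureReal_def, volume_pi_pi, ENNReal.toReal_prod]
  rfl

theorem tendsto_volume_real_Icc_inter_Icc_div {p q : ℝ} (hp : 0 ≤ p) (hpq : p ≤ q) (c : ℝ) :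
    Tendsto (fun s => volume.real (Icc (-(s * p)) (s * p) ∩ Icc (c - s * q) (c + s * q)) / (2 * s))
      atTop (𝓝 p) := by
  have hlower : Tendsto (fun s : ℝ => p - |c| / s) atTop (𝓝 p) := by
    simpa using tendsto_const_nhds.sub ((tendsto_const_nhds (x := |c|)).div_atTop tendsto_id)
  refine tendsto_of_tendsto_of_tendsto_of_le_of_le' hlower tendsto_const_nhds ?_ ?_
  · filter_upwards [eventually_gt_atTop 0] with s hs
    have hsub : Icc (-(s * p) + |c|) (s * p - |c|) ⊆
        Icc (-(s * p)) (s * p) ∩ Icc (c - s * q) (c + s * q) := by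
      have : s * p ≤ s * q := mul_le_mul_of_nonneg_left hpq hs.le
      rintro x ⟨hx, hx'⟩
      exact ⟨⟨by linarith [abs_nonneg c], by linarith [abs_nonneg c]⟩,
        ⟨by linarith [le_abs_self c], by linarith [neg_abs_le c]⟩⟩
    rw [le_div_iff₀ (by positivity)]
    calc (p - |c| / s) * (2 * s) = s * p - |c| - (-(s * p) + |c|) := by field_simp; ring
      _ ≤ volume.real (Icc (-(s * p) + |c|) (s * p - |c|)) := by
        rw [Real.volume_real_Icc]; exact le_max_left _ _
      _ ≤ _ := measureReal_mono hsub
        ((measure_mono inter_subset_left).trans_lt measure_Icc_lt_top).ne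
  · filter_upwards [eventually_gt_atTop 0] with s hs
    rw [div_le_iff₀ (by positivity)]
    calc _ ≤ volume.real (Icc (-(s * p)) (s * p)) :=
          measureReal_mono inter_subset_left measure_Icc_lt_top.ne
      _ = p * (2 * s) := by
        rw [Real.volume_real_Icc_of_le (by nlinarith)]; ring

theorem tendsto_volume_real_cube_inter_preimage_sub_div {n : ℕ} {p q : ℝ} (hp : 0 ≤ p)
    (hpq : p ≤ q) (u : Fin n → ℝ) :
    Tendsto (fun s => volume.real (cube n (s * p) ∩ (· - u) ⁻¹' cube n (s * q)) / (2 * s) ^ n)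
      atTop (𝓝 (p ^ n)) := by
  have h := tendsto_finsetProd Finset.univ fun i _ =>
    tendsto_volume_real_Icc_inter_Icc_div hp hpq (u i)
  simp only [Finset.prod_div_distrib, Finset.prod_const, Finset.card_univ,
    Fintype.card_fin] at h
  simpa only [volume_real_cube_inter_preimage_sub] using h

theorem tendsto_integral_cube_integral_cube_sub {n : ℕ} {p q : ℝ} (hp : 0 ≤ p) (hpq : p ≤ q)
    {C : (Fin n → ℝ) → ℝ} (hC : Integrable C) :
    Tendsto (fun s => ((2 * s) ^ n)⁻¹ *
        ∫ x in cube n (s * p), ∫ y in cube n (s * q), C (x - y))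
      atTop (𝓝 (p ^ n * ∫ u, C u)) := by
  have hcube : ∀ a, volume (cube n a) ≠ ⊤ := fun _ => measure_Icc_lt_top.ne
  have hmeas : ∀ a, MeasurableSet (cube n a) := fun _ => measurableSet_Icc
  have hkernel_le : ∀ s > 0, ∀ u,
      ((2 * s) ^ n)⁻¹ * volume.real (cube n (s * p) ∩ (· - u) ⁻¹' cube n (s * q)) ≤ p ^ n := by
    intro s hs u
    rw [inv_mul_le_iff₀ (by positivity), ← mul_pow, mul_assoc, ← volume_real_cube (by positivity)]
    exact measureReal_mono inter_subset_left (hcube _)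
  have hrepr : ∀ s, ((2 * s) ^ n)⁻¹ * ∫ x in cube n (s * p), ∫ y in cube n (s * q), C (x - y) =
      ∫ u, ((2 * s) ^ n)⁻¹ * (volume.real (cube n (s * p) ∩ (· - u) ⁻¹' cube n (s * q)) * C u) :=
    fun s => by rw [setIntegral_setIntegral_sub (hcube _) (hmeas _) hC, integral_const_mul]
  rw [← integral_const_mul]
  refine (tendsto_integral_filter_of_dominated_convergence (fun u => p ^ n * ‖C u‖)
    (Eventually.of_forall fun s => ?_) ?_ (hC.norm.const_mul _)
    (ae_of_all _ fun u => ?_)).congr fun s => (hrepr s).symm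
  · exact ((measurable_measureReal_inter_preimage_sub (hmeas _)
      (hmeas _)).aestronglyMeasurable.mul hC.1).const_mul _
  · filter_upwards [eventually_gt_atTop 0] with s hs
    refine ae_of_all _ fun u => ?_
    rw [← mul_assoc, norm_mul, Real.norm_of_nonneg (by positivity)]
    exact mul_le_mul_of_nonneg_right (hkernel_le s hs u) (norm_nonneg _)
  · simp_rw [← mul_assoc, inv_mul_eq_div]
    exact (tendsto_volume_real_cube_inter_preimage_sub_div hp hpq u).mul_const _

/-- For `C ∈ L¹(ℝⁿ)` and `0 < y₁ ≤ y₂`, with `s₁ = s·y₁^{1/n}` and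
`s₂ = s·y₂^{1/n}`,
`(2s)^{-n} ∫_{[-s₁,s₁]ⁿ}∫_{[-s₂,s₂]ⁿ} C(x-y) dx dy → y₁ ∫_{ℝⁿ} C(u) du` as `s → ∞`. -/
theorem stmt11 {n : ℕ} (hn : 1 ≤ n) (C : (Fin n → ℝ) → ℝ)
    (hC : Integrable C (volume : Measure (Fin n → ℝ)))
    (y₁ y₂ : ℝ) (h1 : 0 < y₁) (h12 : y₁ ≤ y₂) :
    Tendsto
      (fun s : ℝ => ((2*s) ^ n)⁻¹ *
        ∫ x in cube n (s * y₁ ^ ((n:ℝ)⁻¹)), ∫ y in cube n (s * y₂ ^ ((n:ℝ)⁻¹)),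
          C (x - y))
      atTop (𝓝 (y₁ * ∫ u, C u)) := by
  have hroot : (y₁ ^ ((n : ℝ)⁻¹)) ^ n = y₁ := Real.rpow_inv_natCast_pow h1.le (by omega)
  have h := tendsto_integral_cube_integral_cube_sub (p := y₁ ^ ((n : ℝ)⁻¹)) (by positivity)
    (Real.rpow_le_rpow h1.le h12 (by positivity)) hC
  rwa [hroot] at h
end
end
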